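/- (Variance bound.) Let M and M̂ be two finite MDPs sharing the same state space S and action space A. Let γ, γ_Bw be discount factors with 0 ≤ γ ≤ γ_Bw < 1. Let π* be an optimal policy for M at discount γ and π̂ an optimal policy for M̂ at discount γ. Let ε̂ = ||V_{M,γ}^{π*} − V_{M,γ}^{π̂}||_∞ (both value vectors computed in M with discount γ), let δ̂ = δ_M(π*, π̂) be the discordant action variation computed with the transitions of M, and let κ = κ_γ be the value-function variation of M at discount γ. Then ||V_{M,γ_Bw}^{π*} − V_{M,γ_Bw}^{π̂}||_∞ ≤ ε̂ · (1 − γ)/(1 − γ_Bw) + (δ̂/2) · κ · (γ_Bw − γ) / ((1 − γ_Bw)(1 − γ_Bw(1 − δ̂/2))). -/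

import Mathlib

open Finset

noncomputable section

/-- Transition matrix of a policy `π` in an MDP with transition function `P`. -/
def polMatrix {S A : Type*} [Fintype S] [DecidableEq S] (P : S → A → S → ℝ) (π : S → A) :
    Matrix S S ℝ :=
  fun s s' => P s (π s) s'

/-- Reward vector of a policy `π` for a reward function `R`. -/
def polReward {S A : Type*} (R : S → A → ℝ) (π : S → A) : S → ℝ :=
  fun s => R s (π s)

/-- Value vector of a policy: `V_γ^π = Σ_{k=0}^∞ γ^k P_π^k R_π`. -/
def valueVec {S A : Type*} [Fintype S] [DecidableEq S] (P : S → A → S → ℝ) (R : S → A → ℝ)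
    (γ : ℝ) (π : S → A) : S → ℝ :=
  ∑' k : ℕ, γ ^ k • ((polMatrix P π ^ k).mulVec (polReward R π))

/-- A policy `π⋆` is optimal for discount `γ` if it dominates every policy in every state. -/
def IsOptimalPolicy {S A : Type*} [Fintype S] [DecidableEq S] (P : S → A → S → ℝ)
    (R : S → A → ℝ) (γ : ℝ) (πstar : S → A) : Prop :=
  ∀ (π : S → A) (s : S), valueVec P R γ π s ≤ valueVec P R γ πstar s

/-- Discordant action variation of two policies:
`max_{s : π s ≠ π' s} ‖P(·|s, π s) − P(·|s, π' s)‖₁`, taken to be `0` when `π = π'`. -/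
def discordantVar {S A : Type*} [Fintype S] [DecidableEq S] [DecidableEq A]
    (P : S → A → S → ℝ) (π π' : S → A) : ℝ :=
  Finset.fold max 0 (fun s => ∑ s', |P s (π s) s' - P s (π' s) s'|)
    (Finset.univ.filter fun s => π s ≠ π' s)

/-- Value-function variation of a policy: `max_{s,s'} |V(s) − V(s')|`. -/
def valueVariation {S : Type*} [Fintype S] [Nonempty S] (V : S → ℝ) : ℝ :=
  (Finset.univ : Finset (S × S)).sup' Finset.univ_nonempty (fun pr => |V pr.1 - V pr.2|)

/-- Sup norm of a vector on a nonempty finite set. -/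
def supNorm {S : Type*} [Fintype S] [Nonempty S] (x : S → ℝ) : ℝ :=
  Finset.univ.sup' Finset.univ_nonempty (fun s => |x s|)

/-! For a fixed policy with transition matrix `P`, `V_{γ'} - V_γ = (γ' - γ) (1 - γ' P)⁻¹ P V_γ`.
So, with `V = V^{π⋆}_γ` and `W = V^{π̂}_γ`, the difference at discount `γBw` is `V - W` plus
`(γBw - γ) ((X - Y) + (Y - Y'))`, where `X`, `Y`, `Y'` are `(1 - γBw P_{π⋆})⁻¹ P_{π⋆} V`,
`(1 - γBw P_{π̂})⁻¹ P_{π̂} V` and `(1 - γBw P_{π̂})⁻¹ P_{π̂} W`; here `‖Y - Y'‖ ≤ ε̂ / (1 - γBw)`.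
For `X - Y`, couple the rows of `P_{π⋆}` and `P_{π̂}` maximally: they share all but the mass
`δ̂ / 2`, so `‖X - Y‖ ≤ γBw (1 - δ̂/2) ‖X - Y‖ + (δ̂/2) κ / (1 - γBw)`. -/

open Matrix

section SupNorm

variable {S : Type*} [Fintype S]

lemma sub_apply_le_norm_sub (X Y : S → ℝ) (z : S) : X z - Y z ≤ ‖X - Y‖ :=
  (le_abs_self _).trans (norm_le_pi_norm (X - Y) z)

variable [Nonempty S]

lemma supNorm_eq_norm (x : S → ℝ) : supNorm x = ‖x‖ := by
  refine le_antisymm (Finset.sup'_le _ _ fun s _ => norm_le_pi_norm x s) ?_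
  exact (pi_norm_le_iff_of_nonempty x).mpr fun s =>
    Finset.le_sup' (fun s => |x s|) (Finset.mem_univ s)

lemma sub_le_valueVariation (V : S → ℝ) (s t : S) : V s - V t ≤ valueVariation V :=
  (le_abs_self _).trans
    (Finset.le_sup' (fun pr : S × S => |V pr.1 - V pr.2|) (Finset.mem_univ (s, t)))

end SupNorm

section DiscountedSum

variable {S : Type*} [Fintype S] [DecidableEq S] {M : Matrix S S ℝ} {β : ℝ}

lemma norm_mulVec_le_of_mem_rowStochastic (hM : M ∈ rowStochastic ℝ S) (v : S → ℝ) :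
    ‖M *ᵥ v‖ ≤ ‖v‖ := by
  refine (pi_norm_le_iff_of_nonneg (norm_nonneg v)).mpr fun s => ?_
  calc ‖(M *ᵥ v) s‖ = |∑ z, M s z * v z| := rfl
    _ ≤ ∑ z, M s z * ‖v‖ := by
      refine (Finset.abs_sum_le_sum_abs _ _).trans (Finset.sum_le_sum fun z _ => ?_)
      rw [abs_mul, abs_of_nonneg (nonneg_of_mem_rowStochastic hM)]
      exact mul_le_mul_of_nonneg_left (norm_le_pi_norm v z) (nonneg_of_mem_rowStochastic hM)
    _ = ‖v‖ := by rw [← Finset.sum_mul, sum_row_of_mem_rowStochastic hM, one_mul]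

/-- The resolvent `(1 - β M)⁻¹ v`, written as its Neumann series. -/
def discountedSum (M : Matrix S S ℝ) (β : ℝ) (v : S → ℝ) : S → ℝ :=
  ∑' k : ℕ, β ^ k • (M ^ k *ᵥ v)

lemma discountedSum_smul (c : ℝ) (v : S → ℝ) :
    discountedSum M β (c • v) = c • discountedSum M β v := by
  simp only [discountedSum, mulVec_smul, smul_comm _ c]
  exact tsum_const_smul'' c

variable (hM : M ∈ rowStochastic ℝ S) (hβ0 : 0 ≤ β) (hβ1 : β < 1)
include hM hβ0 hβ1

lemma summable_discountedSum (v : S → ℝ) : Summable fun k : ℕ => β ^ k • (M ^ k *ᵥ v) := by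
  refine ((summable_geometric_of_lt_one hβ0 hβ1).mul_right ‖v‖).of_norm_bounded fun k => ?_
  rw [norm_smul, Real.norm_of_nonneg (pow_nonneg hβ0 k)]
  exact mul_le_mul_of_nonneg_left
    (norm_mulVec_le_of_mem_rowStochastic (pow_mem hM k) v) (pow_nonneg hβ0 k)

lemma discountedSum_eq_add (v : S → ℝ) :
    discountedSum M β v = v + β • M *ᵥ discountedSum M β v := by
  have hs := summable_discountedSum hM hβ0 hβ1 v
  let L : (S → ℝ) →L[ℝ] S → ℝ := LinearMap.toContinuousLinearMap (β • M.mulVecLin)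
  have hL : L (discountedSum M β v) = ∑' k : ℕ, β ^ (k + 1) • (M ^ (k + 1) *ᵥ v) := by
    rw [discountedSum, L.map_tsum hs]
    refine tsum_congr fun k => ?_
    rw [pow_succ', pow_succ', ← mulVec_mulVec]
    simp [L, smul_smul, mul_comm]
  rw [show β • M *ᵥ discountedSum M β v = L (discountedSum M β v) from rfl, hL, discountedSum,
    hs.tsum_eq_zero_add]
  simp

lemma norm_le_of_eq_add_smul_mulVec {u v : S → ℝ} (hu : u = v + β • M *ᵥ u) :
    ‖u‖ ≤ ‖v‖ / (1 - β) := by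
  have h : ‖u‖ ≤ ‖v‖ + β * ‖u‖ := by
    conv_lhs => rw [hu]
    refine (norm_add_le _ _).trans ?_
    rw [norm_smul, Real.norm_of_nonneg hβ0]
    gcongr
    exact norm_mulVec_le_of_mem_rowStochastic hM u
  rw [le_div_iff₀ (sub_pos.mpr hβ1)]
  linarith

lemma eq_discountedSum_of_eq_add {u v : S → ℝ} (hu : u = v + β • M *ᵥ u) :
    u = discountedSum M β v := by
  have hfix : u - discountedSum M β v = 0 + β • M *ᵥ (u - discountedSum M β v) := by
    conv_lhs => rw [hu, discountedSum_eq_add hM hβ0 hβ1 v]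
    rw [mulVec_sub, smul_sub]
    abel
  have := norm_le_of_eq_add_smul_mulVec hM hβ0 hβ1 hfix
  rw [norm_zero, zero_div] at this
  exact sub_eq_zero.mp (norm_le_zero_iff.mp this)

lemma norm_discountedSum_le (v : S → ℝ) : ‖discountedSum M β v‖ ≤ ‖v‖ / (1 - β) :=
  norm_le_of_eq_add_smul_mulVec hM hβ0 hβ1 (discountedSum_eq_add hM hβ0 hβ1 v)

lemma discountedSum_sub (v w : S → ℝ) :
    discountedSum M β (v - w) = discountedSum M β v - discountedSum M β w := by
  simp only [discountedSum, mulVec_sub, smul_sub]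
  exact (summable_discountedSum hM hβ0 hβ1 v).tsum_sub (summable_discountedSum hM hβ0 hβ1 w)

lemma discountedSum_mulVec (v : S → ℝ) :
    discountedSum M β (M *ᵥ v) = M *ᵥ (v + β • discountedSum M β (M *ᵥ v)) := by
  conv_lhs => rw [discountedSum_eq_add hM hβ0 hβ1]
  rw [mulVec_add, mulVec_smul]

lemma discountedSum_sub_discountedSum {β' : ℝ} (hβ'0 : 0 ≤ β') (hβ'1 : β' < 1) (v : S → ℝ) :
    discountedSum M β' v - discountedSum M β v =
      (β' - β) • discountedSum M β' (M *ᵥ discountedSum M β v) := by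
  rw [← discountedSum_smul]
  refine eq_discountedSum_of_eq_add hM hβ'0 hβ'1 ?_
  conv_lhs => rw [discountedSum_eq_add hM hβ'0 hβ'1 v, discountedSum_eq_add hM hβ0 hβ1 v]
  rw [mulVec_sub]
  module

end DiscountedSum

section Coupling

variable {S : Type*} [Fintype S]

lemma sum_sub_min_eq_half_sum_abs_sub {p q : S → ℝ} (h : ∑ z, p z = ∑ z, q z) :
    ∑ z, (p z - min (p z) (q z)) = (∑ z, |p z - q z|) / 2 := by
  have hpoint : ∀ z, p z - min (p z) (q z) = (p z - q z + |p z - q z|) / 2 := fun z => by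
    rcases le_total (p z) (q z) with hz | hz
    · simp [min_eq_left hz, abs_of_nonpos (sub_nonpos.mpr hz)]
    · simp [min_eq_right hz, abs_of_nonneg (sub_nonneg.mpr hz)]
  simp only [hpoint, ← Finset.sum_div, Finset.sum_add_distrib, Finset.sum_sub_distrib, h, sub_self,
    zero_add]

variable [Nonempty S]

lemma dotProduct_sub_dotProduct_le_mul {p q f g : S → ℝ} {d c : ℝ} (hp : ∀ u, 0 ≤ p u)
    (hq : ∀ u, 0 ≤ q u) (hpd : ∑ u, p u = d) (hqd : ∑ u, q u = d)
    (hfg : ∀ u w, f u - g w ≤ c) : p ⬝ᵥ f - q ⬝ᵥ g ≤ d * c := by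
  obtain ⟨u₀, -, hu₀⟩ := Finset.exists_max_image Finset.univ f Finset.univ_nonempty
  obtain ⟨w₀, -, hw₀⟩ := Finset.exists_min_image Finset.univ g Finset.univ_nonempty
  have hf : p ⬝ᵥ f ≤ d * f u₀ := by
    rw [← hpd, Finset.sum_mul]
    exact Finset.sum_le_sum fun u _ => mul_le_mul_of_nonneg_left (hu₀ u (Finset.mem_univ u)) (hp u)
  have hg : d * g w₀ ≤ q ⬝ᵥ g := by
    rw [← hqd, Finset.sum_mul]
    exact Finset.sum_le_sum fun w _ => mul_le_mul_of_nonneg_left (hw₀ w (Finset.mem_univ w)) (hq w)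
  have hd : 0 ≤ d := hpd ▸ Finset.sum_nonneg fun u _ => hp u
  nlinarith [mul_le_mul_of_nonneg_left (hfg u₀ w₀) hd]

/-- Maximal coupling: `p` and `q` share the mass `min p q`, where `f - g` is compared pointwise;
only the remaining mass, the total variation distance, needs the cross bound. -/
lemma dotProduct_sub_dotProduct_le_of_coupling {p q f g : S → ℝ} {a b : ℝ}
    (hp : ∀ u, 0 ≤ p u) (hq : ∀ u, 0 ≤ q u) (hp1 : ∑ u, p u = 1) (hq1 : ∑ u, q u = 1)
    (hdiag : ∀ z, f z - g z ≤ a) (hcross : ∀ u w, f u - g w ≤ b) :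
    p ⬝ᵥ f - q ⬝ᵥ g ≤
      (1 - (∑ z, |p z - q z|) / 2) * a + (∑ z, |p z - q z|) / 2 * b := by
  set t := (∑ z, |p z - q z|) / 2
  set m : S → ℝ := fun z => min (p z) (q z)
  have hpm : ∑ z, (p - m) z = t := sum_sub_min_eq_half_sum_abs_sub (hp1.trans hq1.symm)
  have hqm : ∑ z, (q - m) z = t := by
    simpa only [Pi.sub_apply, m, min_comm, abs_sub_comm] using
      sum_sub_min_eq_half_sum_abs_sub (hq1.trans hp1.symm)
  have hm : ∑ z, m z = 1 - t := by
    rw [← hpm, ← hp1, ← Finset.sum_sub_distrib]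
    simp
  have hshared : m ⬝ᵥ f - m ⬝ᵥ g ≤ (1 - t) * a := by
    rw [← dotProduct_sub, ← hm, Finset.sum_mul]
    exact Finset.sum_le_sum fun z _ =>
      mul_le_mul_of_nonneg_left (hdiag z) (le_min (hp z) (hq z))
  have hexcess : (p - m) ⬝ᵥ f - (q - m) ⬝ᵥ g ≤ t * b :=
    dotProduct_sub_dotProduct_le_mul (fun z => sub_nonneg.mpr (min_le_left _ _))
      (fun z => sub_nonneg.mpr (min_le_right _ _)) hpm hqm hcross
  calc p ⬝ᵥ f - q ⬝ᵥ g = (m ⬝ᵥ f - m ⬝ᵥ g) + ((p - m) ⬝ᵥ f - (q - m) ⬝ᵥ g) := by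
        simp only [sub_dotProduct]; ring
    _ ≤ (1 - t) * a + t * b := add_le_add hshared hexcess

end Coupling

section TwoChains

variable {S : Type*} [Fintype S] [DecidableEq S] [Nonempty S] {M N : Matrix S S ℝ}
  {β κ x : ℝ} {V X Y : S → ℝ}

variable (hM : M ∈ rowStochastic ℝ S) (hN : N ∈ rowStochastic ℝ S) (hβ0 : 0 ≤ β) (hβ1 : β < 1)
  (hV : ∀ u w, V u - V w ≤ κ) (hX : X = M *ᵥ (V + β • X)) (hY : Y = N *ᵥ (V + β • Y))
include hM hN hβ0 hβ1 hV hX hY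

lemma sub_le_div_of_eq_mulVec (u w : S) : X u - Y w ≤ κ / (1 - β) := by
  obtain ⟨⟨u₀, w₀⟩, -, hmax⟩ := Finset.exists_max_image (Finset.univ : Finset (S × S))
    (fun z => X z.1 - Y z.2) Finset.univ_nonempty
  have hX₀ : X u₀ = M u₀ ⬝ᵥ (V + β • X) := congrFun hX u₀
  have hY₀ : Y w₀ = N w₀ ⬝ᵥ (V + β • Y) := congrFun hY w₀
  have hstep : M u₀ ⬝ᵥ (V + β • X) - N w₀ ⬝ᵥ (V + β • Y) ≤ 1 * (κ + β * (X u₀ - Y w₀)) := by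
    refine dotProduct_sub_dotProduct_le_mul (fun _ => nonneg_of_mem_rowStochastic hM)
      (fun _ => nonneg_of_mem_rowStochastic hN) (sum_row_of_mem_rowStochastic hM u₀)
      (sum_row_of_mem_rowStochastic hN w₀) fun u w => ?_
    have := mul_le_mul_of_nonneg_left (hmax (u, w) (Finset.mem_univ _)) hβ0
    simp only [Pi.add_apply, Pi.smul_apply, smul_eq_mul]
    linarith [hV u w]
  have hmax' := hmax (u, w) (Finset.mem_univ _)
  rw [le_div_iff₀ (sub_pos.mpr hβ1)]
  nlinarith

lemma sub_le_of_eq_mulVec_of_tv (htv : ∀ s, (∑ z, |M s z - N s z|) / 2 ≤ x) (s : S) :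
    X s - Y s ≤ β * (1 - x) * ‖X - Y‖ + x * (κ + β * (κ / (1 - β))) := by
  have hcross := sub_le_div_of_eq_mulVec hM hN hβ0 hβ1 hV hX hY
  have hnorm : ‖X - Y‖ ≤ κ / (1 - β) := (pi_norm_le_iff_of_nonempty _).mpr fun z =>
    abs_sub_le_iff.mpr ⟨hcross z z, sub_le_div_of_eq_mulVec hN hM hβ0 hβ1 hV hY hX z z⟩
  have hcouple := dotProduct_sub_dotProduct_le_of_coupling (p := M s) (q := N s)
    (f := V + β • X) (g := V + β • Y) (a := β * ‖X - Y‖) (b := κ + β * (κ / (1 - β)))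
    (fun _ => nonneg_of_mem_rowStochastic hM) (fun _ => nonneg_of_mem_rowStochastic hN)
    (sum_row_of_mem_rowStochastic hM s) (sum_row_of_mem_rowStochastic hN s)
    (fun z => by
      have := mul_le_mul_of_nonneg_left (sub_apply_le_norm_sub X Y z) hβ0
      simp only [Pi.add_apply, Pi.smul_apply, smul_eq_mul]
      linarith)
    (fun u w => by
      have := mul_le_mul_of_nonneg_left (hcross u w) hβ0
      simp only [Pi.add_apply, Pi.smul_apply, smul_eq_mul]
      linarith [hV u w])
  have hκ : 0 ≤ κ := by simpa using hV s s
  have hab : β * ‖X - Y‖ ≤ κ + β * (κ / (1 - β)) := by nlinarith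
  have hXs : X s = M s ⬝ᵥ (V + β • X) := congrFun hX s
  have hYs : Y s = N s ⬝ᵥ (V + β • Y) := congrFun hY s
  linarith [mul_le_mul_of_nonneg_right (htv s) (sub_nonneg.mpr hab)]

lemma norm_sub_le_of_eq_mulVec_of_tv (htv : ∀ s, (∑ z, |M s z - N s z|) / 2 ≤ x) :
    ‖X - Y‖ ≤ x * κ / ((1 - β) * (1 - β * (1 - x))) := by
  have hx : 0 ≤ x := (by positivity : (0 : ℝ) ≤ _).trans (htv (Classical.arbitrary S))
  have htv' : ∀ s, (∑ z, |N s z - M s z|) / 2 ≤ x := by simpa only [abs_sub_comm] using htv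
  have h := sub_le_of_eq_mulVec_of_tv hM hN hβ0 hβ1 hV hX hY htv
  have h' := sub_le_of_eq_mulVec_of_tv hN hM hβ0 hβ1 hV hY hX htv'
  rw [norm_sub_rev Y X] at h'
  have hβ : 0 < 1 - β := sub_pos.mpr hβ1
  have hbound : ‖X - Y‖ ≤ β * (1 - x) * ‖X - Y‖ + x * (κ / (1 - β)) := by
    rw [show κ / (1 - β) = κ + β * (κ / (1 - β)) by field_simp; ring]
    exact (pi_norm_le_iff_of_nonempty _).mpr fun s => abs_sub_le_iff.mpr ⟨h s, h' s⟩
  have hβx : 0 < 1 - β * (1 - x) := by nlinarith [mul_nonneg hβ0 hx]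
  rw [le_div_iff₀ (mul_pos hβ hβx)]
  calc ‖X - Y‖ * ((1 - β) * (1 - β * (1 - x))) = ‖X - Y‖ * (1 - β * (1 - x)) * (1 - β) := by ring
    _ ≤ x * (κ / (1 - β)) * (1 - β) := mul_le_mul_of_nonneg_right (by linarith) hβ.le
    _ = x * κ := by field_simp

end TwoChains

lemma norm_discountedSum_sub_discountedSum_le {S : Type*} [Fintype S] [DecidableEq S]
    [Nonempty S] {M N : Matrix S S ℝ} {β β' κ x : ℝ} (hM : M ∈ rowStochastic ℝ S)
    (hN : N ∈ rowStochastic ℝ S) (hβ0 : 0 ≤ β) (hββ' : β ≤ β') (hβ'1 : β' < 1) (r r' : S → ℝ)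
    (hV : ∀ u w, discountedSum M β r u - discountedSum M β r w ≤ κ)
    (htv : ∀ s, (∑ z, |M s z - N s z|) / 2 ≤ x) :
    ‖discountedSum M β' r - discountedSum N β' r'‖ ≤
      ‖discountedSum M β r - discountedSum N β r'‖ * (1 - β) / (1 - β')
      + x * κ * (β' - β) / ((1 - β') * (1 - β' * (1 - x))) := by
  have hβ'0 : 0 ≤ β' := hβ0.trans hββ'
  have hβ1 : β < 1 := hββ'.trans_lt hβ'1
  set V := discountedSum M β r
  set W := discountedSum N β r'
  set X := discountedSum M β' (M *ᵥ V)
  set Y := discountedSum N β' (N *ᵥ V)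
  set Y' := discountedSum N β' (N *ᵥ W)
  have hsplit : discountedSum M β' r - discountedSum N β' r'
      = (V - W) + (β' - β) • ((X - Y) + (Y - Y')) := by
    rw [sub_add_sub_cancel, smul_sub, ← discountedSum_sub_discountedSum hM hβ0 hβ1 hβ'0 hβ'1,
      ← discountedSum_sub_discountedSum hN hβ0 hβ1 hβ'0 hβ'1]
    abel
  have hXY : ‖X - Y‖ ≤ x * κ / ((1 - β') * (1 - β' * (1 - x))) :=
    norm_sub_le_of_eq_mulVec_of_tv hM hN hβ'0 hβ'1 hV (discountedSum_mulVec hM hβ'0 hβ'1 V)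
      (discountedSum_mulVec hN hβ'0 hβ'1 V) htv
  have hYY' : ‖Y - Y'‖ ≤ ‖V - W‖ / (1 - β') := by
    rw [← discountedSum_sub hN hβ'0 hβ'1, ← mulVec_sub]
    exact (norm_discountedSum_le hN hβ'0 hβ'1 _).trans
      (div_le_div_of_nonneg_right (norm_mulVec_le_of_mem_rowStochastic hN _) (by linarith))
  have hx : 0 ≤ x := (by positivity : (0 : ℝ) ≤ _).trans (htv (Classical.arbitrary S))
  calc ‖discountedSum M β' r - discountedSum N β' r'‖
      ≤ ‖V - W‖ + (β' - β) * (x * κ / ((1 - β') * (1 - β' * (1 - x))) + ‖V - W‖ / (1 - β')) := by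
        rw [hsplit]
        refine norm_add_le_of_le le_rfl ?_
        rw [norm_smul, Real.norm_of_nonneg (sub_nonneg.mpr hββ')]
        exact mul_le_mul_of_nonneg_left (norm_add_le_of_le hXY hYY') (sub_nonneg.mpr hββ')
    _ = ‖V - W‖ * (1 - β) / (1 - β') + x * κ * (β' - β) / ((1 - β') * (1 - β' * (1 - x))) := by
        have : 1 - β' ≠ 0 := by linarith
        have : 1 - β' * (1 - x) ≠ 0 := by nlinarith [mul_nonneg hβ'0 hx]
        field_simp
        ring

section MDP

variable {S A : Type*} [Fintype S] [DecidableEq S]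

lemma polMatrix_mem_rowStochastic {P : S → A → S → ℝ} (hP0 : ∀ s a s', 0 ≤ P s a s')
    (hP1 : ∀ s a, ∑ s', P s a s' = 1) (π : S → A) : polMatrix P π ∈ rowStochastic ℝ S :=
  mem_rowStochastic_iff_sum.mpr ⟨fun s s' => hP0 s (π s) s', fun s => hP1 s (π s)⟩

lemma discordantVar_nonneg [DecidableEq A] (P : S → A → S → ℝ) (π π' : S → A) :
    0 ≤ discordantVar P π π' :=
  (Finset.le_fold_max 0).mpr (Or.inl le_rfl)

lemma sum_abs_polMatrix_sub_le_discordantVar [DecidableEq A] (P : S → A → S → ℝ)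
    (π π' : S → A) (s : S) :
    ∑ s', |polMatrix P π s s' - polMatrix P π' s s'| ≤ discordantVar P π π' := by
  by_cases h : π s = π' s
  · simp only [polMatrix, h, sub_self, abs_zero, Finset.sum_const_zero]
    exact discordantVar_nonneg P π π'
  · exact (Finset.le_fold_max _).mpr
      (Or.inr ⟨s, Finset.mem_filter.mpr ⟨Finset.mem_univ s, h⟩, le_rfl⟩)

end MDP

theorem variance_bound_general
    {S A : Type*} [Fintype S] [DecidableEq S] [Nonempty S] [DecidableEq A]
    (P : S → A → S → ℝ) (R : S → A → ℝ)
    (hP0 : ∀ s a s', 0 ≤ P s a s') (hP1 : ∀ s a, ∑ s', P s a s' = 1)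
    (γ γBw : ℝ) (hγ0 : 0 ≤ γ) (hγγBw : γ ≤ γBw) (hγBw1 : γBw < 1)
    (πstar πhat : S → A) :
    supNorm (fun s => valueVec P R γBw πstar s - valueVec P R γBw πhat s) ≤
      supNorm (fun s => valueVec P R γ πstar s - valueVec P R γ πhat s) * (1 - γ) / (1 - γBw)
      + (discordantVar P πstar πhat / 2) * valueVariation (valueVec P R γ πstar) * (γBw - γ) /
          ((1 - γBw) * (1 - γBw * (1 - discordantVar P πstar πhat / 2))) := by
  rw [supNorm_eq_norm, supNorm_eq_norm]
  exact norm_discountedSum_sub_discountedSum_le (polMatrix_mem_rowStochastic hP0 hP1 πstar)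
    (polMatrix_mem_rowStochastic hP0 hP1 πhat) hγ0 hγγBw hγBw1
    (polReward R πstar) (polReward R πhat) (sub_le_valueVariation _)
    fun s => div_le_div_of_nonneg_right (sum_abs_polMatrix_sub_le_discordantVar P πstar πhat s)
      zero_le_two

/-- **Variance bound.**
`M = (P,R)` and `M̂ = (P̂,R̂)` share state and action spaces. With `π⋆` optimal for `M` at
discount `γ`, `π̂` optimal for `M̂` at discount `γ`, `ε̂ = ‖V_{M,γ}^{π⋆} − V_{M,γ}^{π̂}‖_∞`,
`δ̂ = δ_M(π⋆, π̂)`, and `κ` the value-function variation of `M` at discount `γ`,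
`‖V_{M,γBw}^{π⋆} − V_{M,γBw}^{π̂}‖_∞
  ≤ ε̂ (1−γ)/(1−γBw) + (δ̂/2) κ (γBw−γ) / ((1−γBw)(1−γBw(1−δ̂/2)))`. -/
theorem variance_bound
    {S A : Type*} [Fintype S] [DecidableEq S] [Nonempty S] [Fintype A] [Nonempty A] [DecidableEq A]
    (P Phat : S → A → S → ℝ) (R Rhat : S → A → ℝ) (Rmax Rmaxhat : ℝ)
    (hP0 : ∀ s a s', 0 ≤ P s a s') (hP1 : ∀ s a, ∑ s', P s a s' = 1)
    (hPhat0 : ∀ s a s', 0 ≤ Phat s a s') (hPhat1 : ∀ s a, ∑ s', Phat s a s' = 1)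
    (hRmax : 0 ≤ Rmax) (hR0 : ∀ s a, 0 ≤ R s a) (hR1 : ∀ s a, R s a ≤ Rmax)
    (hRmaxhat : 0 ≤ Rmaxhat) (hRhat0 : ∀ s a, 0 ≤ Rhat s a) (hRhat1 : ∀ s a, Rhat s a ≤ Rmaxhat)
    (γ γBw : ℝ) (hγ0 : 0 ≤ γ) (hγγBw : γ ≤ γBw) (hγBw1 : γBw < 1)
    (πstar πhat : S → A)
    (hπstar : IsOptimalPolicy P R γ πstar) (hπhat : IsOptimalPolicy Phat Rhat γ πhat) :
    supNorm (fun s => valueVec P R γBw πstar s - valueVec P R γBw πhat s) ≤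
      supNorm (fun s => valueVec P R γ πstar s - valueVec P R γ πhat s) * (1 - γ) / (1 - γBw)
      + (discordantVar P πstar πhat / 2) * valueVariation (valueVec P R γ πstar) * (γBw - γ) /
          ((1 - γBw) * (1 - γBw * (1 - discordantVar P πstar πhat / 2))) :=
  variance_bound_general P R hP0 hP1 γ γBw hγ0 hγγBw hγBw1 πstar πhat
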